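/- Let U be a positively filtered R-algebra over a complete DVR R that is deformable (gr U is flat over R). For t ≥ 0, the intersection of the first deformation U₁ = Σ_{i≥0} π^i F_iU with π^t U equals Σ_{i≥t} π^i F_iU. -/

import Mathlib

section FilteredDeformable

variable {R U : Type*} [CommRing R] [Ring U] [Algebra R U]

/-- The image `r • N` of a submodule `N ⊆ U` under multiplication by the scalar `r ∈ R`. -/
noncomputable def smulSub (r : R) (N : Submodule R U) : Submodule R U :=
  Submodule.map (r • (LinearMap.id : U →ₗ[R] U)) N

/-- A positively filtered `R`-algebra structure on `U`: an exhaustive, increasing,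
multiplicative filtration `F₀U ⊆ F₁U ⊆ ⋯` with `1 ∈ F₀U`. -/
structure AlgebraFiltration (F : ℕ → Submodule R U) : Prop where
  mono : Monotone F
  one_mem : (1 : U) ∈ F 0
  mul_le : ∀ i j : ℕ, ∀ x ∈ F i, ∀ y ∈ F j, x * y ∈ F (i + j)
  exhaustive : ∀ u : U, ∃ i, u ∈ F i

/-- `F` shifted down one step, with `F₋₁ = ⊥`; used to express conditions on the associated
graded ring `gr U = ⊕ᵢ Fᵢ U / Fᵢ₋₁ U`. -/
noncomputable def Fpred (F : ℕ → Submodule R U) : ℕ → Submodule R U :=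
  fun i => if i = 0 then ⊥ else F (i - 1)

/-- `U` is deformable: the associated graded ring `gr U` is `π`-torsion-free
(equivalently, flat over the DVR `R`).  Concretely, for every `i` and `x ∈ Fᵢ U`, if
`π • x ∈ Fᵢ₋₁ U` then `x ∈ Fᵢ₋₁ U` (where `F₋₁ U = 0`). -/
def GrTorsionFree (π : R) (F : ℕ → Submodule R U) : Prop :=
  ∀ i : ℕ, ∀ x ∈ F i, π • x ∈ Fpred F i → x ∈ Fpred F i

/-- The associated graded ring `gr U` is commutative: commutators drop filtration degree. -/
def GrCommutative (F : ℕ → Submodule R U) : Prop :=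
  ∀ i j : ℕ, ∀ x ∈ F i, ∀ y ∈ F j, x * y - y * x ∈ Fpred F (i + j)

end FilteredDeformable

/-!
Write `Sₜ = Σ_{i≥t} πⁱ Fᵢ U`, so that `U₁ = S₀` and `Sₜ = πᵗ Fₜ U + Sₜ₊₁` with `Sₜ₊₁ ⊆ πᵗ⁺¹ U`.
It suffices to show `Sₜ ∩ πᵗ⁺¹ U ⊆ Sₜ₊₁` and induct on `t`. If `x ∈ Fₜ` and `πᵗ x = πᵗ⁺¹ y`,
then `x = π y` because `U` is `π`-torsion-free, and `y ∈ Fₜ` because torsion-freeness of `gr U`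
makes every `Fᵢ` saturated (`π y ∈ Fᵢ → y ∈ Fᵢ`); hence `πᵗ x = πᵗ⁺¹ y ∈ πᵗ⁺¹ Fₜ₊₁ ⊆ Sₜ₊₁`.
-/

section Deformation

variable {R U : Type*} [CommRing R] [Ring U] [Algebra R U]

lemma mem_smulSub {r : R} {N : Submodule R U} {x : U} :
    x ∈ smulSub r N ↔ ∃ y ∈ N, r • y = x := by
  simp [smulSub, Submodule.mem_map]

lemma smulSub_mono {r : R} {N N' : Submodule R U} (h : N ≤ N') : smulSub r N ≤ smulSub r N' :=
  Submodule.map_mono h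

lemma smulSub_pow_top_antitone (π : R) :
    Antitone fun n : ℕ => smulSub (π ^ n) (⊤ : Submodule R U) := by
  intro m n hmn x hx
  obtain ⟨y, -, rfl⟩ := mem_smulSub.1 hx
  refine mem_smulSub.2 ⟨π ^ (n - m) • y, trivial, ?_⟩
  rw [← mul_smul, ← pow_add, Nat.add_sub_cancel' hmn]

lemma Fpred_mono {F : ℕ → Submodule R U} (hmono : Monotone F) : Monotone (Fpred F) := by
  intro i j hij
  unfold Fpred
  split_ifs with hi hj
  · exact le_rfl
  · exact bot_le
  · omega
  · exact hmono (by omega)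

lemma le_Fpred_of_lt {F : ℕ → Submodule R U} (hmono : Monotone F) {i j : ℕ} (hji : j < i) :
    F j ≤ Fpred F i := by
  rw [Fpred, if_neg (by omega)]
  exact hmono (by omega)

/-- For `i = 0` this says `U` is `π`-torsion-free, for `i = k + 1` that `Fₖ U` is
`π`-saturated in `U`. -/
lemma GrTorsionFree.mem_Fpred_of_smul_mem {π : R} {F : ℕ → Submodule R U}
    (hdef : GrTorsionFree π F) (hmono : Monotone F) (i j : ℕ) {w : U} (hw : w ∈ F j)
    (hπw : π • w ∈ Fpred F i) : w ∈ Fpred F i := by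
  induction j generalizing w with
  | zero =>
    rcases Nat.eq_zero_or_pos i with rfl | hi
    · exact hdef 0 w hw hπw
    · exact le_Fpred_of_lt hmono hi hw
  | succ k ih =>
    by_cases hik : i ≤ k + 1
    · have hwk : w ∈ Fpred F (k + 1) := hdef (k + 1) w hw (Fpred_mono hmono hik hπw)
      exact ih (by simpa [Fpred] using hwk) hπw
    · exact le_Fpred_of_lt hmono (by omega) hw

variable {π : R} {F : ℕ → Submodule R U}

lemma GrTorsionFree.isSMulRegular (hdef : GrTorsionFree π F) (hmono : Monotone F)
    (hexh : ∀ u : U, ∃ i, u ∈ F i) : IsSMulRegular U π :=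
  IsSMulRegular.of_right_eq_zero_of_smul fun x hx => by
    obtain ⟨j, hj⟩ := hexh x
    simpa [Fpred] using hdef.mem_Fpred_of_smul_mem hmono 0 j hj (by simp [Fpred, hx])

lemma GrTorsionFree.mem_of_smul_mem (hdef : GrTorsionFree π F) (hmono : Monotone F)
    (hexh : ∀ u : U, ∃ i, u ∈ F i) {i : ℕ} {w : U} (h : π • w ∈ F i) : w ∈ F i := by
  obtain ⟨j, hj⟩ := hexh w
  simpa [Fpred] using hdef.mem_Fpred_of_smul_mem hmono (i + 1) j hj (by simpa [Fpred] using h)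

lemma GrTorsionFree.smul_pow_mem_smulSub_succ (hdef : GrTorsionFree π F) (hmono : Monotone F)
    (hexh : ∀ u : U, ∃ i, u ∈ F i) {t : ℕ} {x : U} (hx : x ∈ F t)
    (h : π ^ t • x ∈ smulSub (π ^ (t + 1)) ⊤) : π ^ t • x ∈ smulSub (π ^ (t + 1)) (F t) := by
  obtain ⟨y, -, hy⟩ := mem_smulSub.1 h
  have hxy : x = π • y :=
    (hdef.isSMulRegular hmono hexh).pow t (by simp only [smul_smul, ← pow_succ, hy])
  exact mem_smulSub.2 ⟨y, hdef.mem_of_smul_mem hmono hexh (hxy ▸ hx), hy⟩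

variable (π F) in
noncomputable def deformationTail (t : ℕ) : Submodule R U :=
  ⨆ i : ℕ, ⨆ _ : t ≤ i, smulSub (π ^ i) (F i)

lemma deformationTail_antitone : Antitone (deformationTail π F) :=
  fun _ _ hst => iSup_mono fun _ => iSup_const_mono hst.trans

lemma deformationTail_eq_sup_succ (t : ℕ) :
    deformationTail π F t = smulSub (π ^ t) (F t) ⊔ deformationTail π F (t + 1) := by
  refine le_antisymm (iSup₂_le fun i hi => ?_) (sup_le (le_iSup₂_of_le t le_rfl le_rfl)
    (deformationTail_antitone t.le_succ))
  rcases hi.eq_or_lt with rfl | hlt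
  · exact le_sup_left
  · exact le_sup_of_le_right (le_iSup₂_of_le i hlt le_rfl)

lemma deformationTail_le_smulSub_pow (t : ℕ) :
    deformationTail π F t ≤ smulSub (π ^ t) ⊤ :=
  iSup₂_le fun _ hi => (smulSub_mono le_top).trans (smulSub_pow_top_antitone π hi)

lemma deformationTail_inf_smulSub_pow_succ_le (hdef : GrTorsionFree π F) (hmono : Monotone F)
    (hexh : ∀ u : U, ∃ i, u ∈ F i) (t : ℕ) :
    deformationTail π F t ⊓ smulSub (π ^ (t + 1)) ⊤ ≤ deformationTail π F (t + 1) := by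
  rintro u ⟨hu, hdiv⟩
  rw [deformationTail_eq_sup_succ] at hu
  obtain ⟨a, ha, w, hw, rfl⟩ := Submodule.mem_sup.1 hu
  obtain ⟨x, hx, rfl⟩ := mem_smulSub.1 ha
  have hxdiv : π ^ t • x ∈ smulSub (π ^ (t + 1)) ⊤ := by
    simpa using sub_mem hdiv (deformationTail_le_smulSub_pow _ hw)
  have hle : smulSub (π ^ (t + 1)) (F t) ≤ deformationTail π F (t + 1) :=
    le_iSup₂_of_le (t + 1) le_rfl (smulSub_mono (hmono t.le_succ))
  exact add_mem (hle (hdef.smul_pow_mem_smulSub_succ hmono hexh hx hxdiv)) hw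

lemma deformationTail_zero_inf_smulSub_pow (hdef : GrTorsionFree π F) (hmono : Monotone F)
    (hexh : ∀ u : U, ∃ i, u ∈ F i) (t : ℕ) :
    deformationTail π F 0 ⊓ smulSub (π ^ t) ⊤ = deformationTail π F t := by
  refine le_antisymm ?_ (le_inf (deformationTail_antitone t.zero_le)
    (deformationTail_le_smulSub_pow t))
  induction t with
  | zero => exact inf_le_left
  | succ t ih =>
    calc deformationTail π F 0 ⊓ smulSub (π ^ (t + 1)) ⊤
        ≤ deformationTail π F 0 ⊓ smulSub (π ^ t) ⊤ ⊓ smulSub (π ^ (t + 1)) ⊤ :=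
          le_inf (inf_le_inf_left _ (smulSub_pow_top_antitone π t.le_succ)) inf_le_right
      _ ≤ deformationTail π F t ⊓ smulSub (π ^ (t + 1)) ⊤ := inf_le_inf_right _ ih
      _ ≤ deformationTail π F (t + 1) :=
          deformationTail_inf_smulSub_pow_succ_le hdef hmono hexh t

end Deformation

theorem first_deformation_inter_pi_pow_general
    {R U : Type*} [CommRing R]
    (π : R)
    [Ring U] [Algebra R U]
    (F : ℕ → Submodule R U) (hF : AlgebraFiltration F)
    (hdef : GrTorsionFree π F) (t : ℕ) :
    (⨆ i : ℕ, smulSub (π ^ i) (F i)) ⊓ smulSub (π ^ t) (⊤ : Submodule R U) =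
      ⨆ i : ℕ, ⨆ _ : t ≤ i, smulSub (π ^ i) (F i) := by
  have hU₁ : (⨆ i : ℕ, smulSub (π ^ i) (F i)) = deformationTail π F 0 := by
    simp [deformationTail]
  rw [hU₁]
  exact deformationTail_zero_inf_smulSub_pow hdef hF.mono hF.exhaustive t

/-- Let `U` be a positively filtered algebra over a complete DVR `R`
(with nonzero nonunit `π`) which is deformable (`gr U` is `π`-torsion-free).  Then for any
`t ≥ 0`, the intersection of the first deformation `U₁ = Σ_{i≥0} πⁱ Fᵢ U` with `πᵗ U`
equals `Σ_{i≥t} πⁱ Fᵢ U`. -/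
theorem first_deformation_inter_pi_pow
    {R U : Type*} [CommRing R] [IsDomain R] [IsDiscreteValuationRing R]
    (π : R) (hπ0 : π ≠ 0) (hπu : ¬IsUnit π)
    [IsAdicComplete (Ideal.span {π}) R]
    [Ring U] [Algebra R U]
    (F : ℕ → Submodule R U) (hF : AlgebraFiltration F)
    (hdef : GrTorsionFree π F) (t : ℕ) :
    (⨆ i : ℕ, smulSub (π ^ i) (F i)) ⊓ smulSub (π ^ t) (⊤ : Submodule R U) =
      ⨆ i : ℕ, ⨆ _ : t ≤ i, smulSub (π ^ i) (F i) :=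
  first_deformation_inter_pi_pow_general π F hF hdef t
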